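/- If the true varying coefficient β(u) is not affine on an interval I of positive measure and the covariance matrix of (X, uX) restricted to u ∈ I is positive definite, then the minimal population mean squared error of any single affine-in-u linear model on I strictly exceeds σ²: min_{a,b} E[(y − aᵀX − (bᵀX)u)² | u ∈ I] > σ². -/

import Mathlib

/-!
For an affine fit `(a, b)` the residual is `δ(u) ⬝ X + ε` with `δ = β - a - u • b`.
Conditioning on `u ∈ I`, an event determined by `(X, u)`, keeps `ε` independent of `(X, u)` and
does not change its law, so the noise contributes exactly `σ²` and the cross term vanishes.
The remaining error `E[(δ(u) ⬝ X)²]` is a quadratic function of `(a, b)` whose Hessian is the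
positive definite second-moment matrix of `(X, uX)`, hence it attains its minimum at some
`(a₀, b₀)`. Since `X` and `u` stay independent under the conditioning, that minimum equals
`E[δ(u)ᵀ E[X Xᵀ] δ(u)]`, which is positive: `E[X Xᵀ]` is a diagonal block of a positive definite
matrix, and `δ(u)` does not vanish almost surely because `β` is not affine.
-/

open MeasureTheory ProbabilityTheory Matrix

section

variable {Ω : Type*} [MeasurableSpace Ω] {μ : Measure Ω}

theorem MeasureTheory.MemLp.cond {E : Type*} [NormedAddCommGroup E] {h : Ω → E} {p : ENNReal}
    (hh : MemLp h p μ) {s : Set Ω} (hs : μ s ≠ 0) : MemLp h p μ[|s] :=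
  (hh.restrict s).smul_measure (ENNReal.inv_ne_top.2 hs)

namespace ProbabilityTheory

variable {α β : Type*} [MeasurableSpace α] [MeasurableSpace β] {f : Ω → α} {g : Ω → β}
  {t : Set β}

theorem IndepFun.cond_preimage [IsFiniteMeasure μ] (hfg : IndepFun f g μ) (hg : Measurable g)
    (ht : MeasurableSet t) : IndepFun f g μ[|g ⁻¹' t] := by
  rcases eq_or_ne (μ (g ⁻¹' t)) 0 with h0 | h0
  · rw [cond_eq_zero_of_meas_eq_zero h0]
    exact (indepFun_iff_measure_inter_preimage_eq_mul).2 fun _ _ _ _ => by simp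
  rw [indepFun_iff_measure_inter_preimage_eq_mul] at hfg ⊢
  intro A B hA hB
  have hAB : g ⁻¹' t ∩ (f ⁻¹' A ∩ g ⁻¹' B) = f ⁻¹' A ∩ g ⁻¹' (t ∩ B) := by
    ext; simp only [Set.mem_inter_iff, Set.mem_preimage]; tauto
  rw [cond_apply (hg ht), cond_apply (hg ht), cond_apply (hg ht), hAB, Set.inter_comm _ (f ⁻¹' A),
    hfg _ _ hA ht, hfg _ _ hA (ht.inter hB), ← Set.preimage_inter]
  set c := μ (g ⁻¹' t)
  calc c⁻¹ * (μ (f ⁻¹' A) * μ (g ⁻¹' (t ∩ B)))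
      = (c⁻¹ * c) * μ (f ⁻¹' A) * (c⁻¹ * μ (g ⁻¹' (t ∩ B))) := by
        rw [ENNReal.inv_mul_cancel h0 (measure_ne_top _ _)]; ring
    _ = _ := by ring

theorem IndepFun.integral_comp_cond_preimage [IsFiniteMeasure μ] (hfg : IndepFun f g μ)
    (hf : AEMeasurable f μ) (hg : Measurable g) (ht : MeasurableSet t) (h0 : μ (g ⁻¹' t) ≠ 0)
    {φ : α → ℝ} (hφ : Measurable φ) :
    ∫ ω, φ (f ω) ∂μ[|g ⁻¹' t] = ∫ ω, φ (f ω) ∂μ := by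
  have hf' : AEMeasurable f μ[|g ⁻¹' t] := hf.mono_ac cond_absolutelyContinuous
  have hmap : (μ[|g ⁻¹' t]).map f = μ.map f := by
    ext A hA
    rw [Measure.map_apply_of_aemeasurable hf' hA, Measure.map_apply_of_aemeasurable hf hA,
      cond_apply (hg ht), Set.inter_comm, hfg.measure_inter_preimage_eq_mul _ _ hA ht, mul_comm,
      mul_assoc, ENNReal.mul_inv_cancel h0 (measure_ne_top _ _), mul_one]
  rw [← integral_map hf' hφ.aestronglyMeasurable, hmap, integral_map hf hφ.aestronglyMeasurable]

theorem IndepFun.integral_add_sq {f g : Ω → ℝ} (hfg : IndepFun f g μ) (hf : MemLp f 2 μ)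
    (hg : MemLp g 2 μ) (hg0 : ∫ ω, g ω ∂μ = 0) :
    ∫ ω, (f ω + g ω) ^ 2 ∂μ = ∫ ω, f ω ^ 2 ∂μ + ∫ ω, g ω ^ 2 ∂μ := by
  have hcross : ∫ ω, f ω * g ω ∂μ = 0 := by
    simpa [hg0] using hfg.integral_mul_eq_mul_integral hf.1 hg.1
  have hfg2 : Integrable (fun ω => 2 * (f ω * g ω)) μ := (hf.integrable_mul hg).const_mul 2
  calc ∫ ω, (f ω + g ω) ^ 2 ∂μ = ∫ ω, f ω ^ 2 + 2 * (f ω * g ω) + g ω ^ 2 ∂μ := by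
        congr 1; ext ω; ring
    _ = _ := by
        have hsum : Integrable (fun ω => f ω ^ 2 + 2 * (f ω * g ω)) μ :=
          hf.integrable_sq.add hfg2
        rw [integral_add hsum hg.integrable_sq,
          integral_add hf.integrable_sq hfg2, integral_const_mul, hcross, mul_zero, add_zero]

theorem IndepFun.integral_add_sq_cond_preimage [IsFiniteMeasure μ] {ε : Ω → ℝ} {V : Ω → β}
    (hεV : IndepFun ε V μ) (hV : Measurable V) (ht : MeasurableSet t) (h0 : μ (V ⁻¹' t) ≠ 0)
    (hε : MemLp ε 2 μ) (hmean : ∫ ω, ε ω ∂μ = 0) {φ : β → ℝ} (hφ : Measurable φ)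
    (hφV : MemLp (fun ω => φ (V ω)) 2 μ[|V ⁻¹' t]) :
    ∫ ω, (φ (V ω) + ε ω) ^ 2 ∂μ[|V ⁻¹' t]
      = ∫ ω, φ (V ω) ^ 2 ∂μ[|V ⁻¹' t] + ∫ ω, ε ω ^ 2 ∂μ := by
  have hεm := hε.1.aemeasurable
  have hmean' : ∫ ω, ε ω ∂μ[|V ⁻¹' t] = 0 := by
    rw [← hmean, hεV.integral_comp_cond_preimage hεm hV ht h0 (φ := fun x => x) measurable_id]
  have hind : IndepFun (fun ω => φ (V ω)) ε μ[|V ⁻¹' t] :=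
    ((hεV.cond_preimage hV ht).comp measurable_id hφ).symm
  rw [hind.integral_add_sq hφV (hε.cond h0) hmean',
    hεV.integral_comp_cond_preimage hεm hV ht h0 (φ := fun x => x ^ 2) (by fun_prop)]

end ProbabilityTheory

section SecondMoment

variable {ι : Type*} [Fintype ι]

noncomputable def secondMoment (μ : Measure Ω) (Z : Ω → ι → ℝ) : Matrix ι ι ℝ :=
  Matrix.of fun j k => ∫ ω, Z ω j * Z ω k ∂μ

theorem integral_sum_sum {κ : Type*} [Fintype κ] {F : ι → κ → Ω → ℝ}
    (hF : ∀ j k, Integrable (F j k) μ) :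
    ∫ ω, ∑ j, ∑ k, F j k ω ∂μ = ∑ j, ∑ k, ∫ ω, F j k ω ∂μ := by
  rw [integral_finsetSum _ fun j _ => integrable_finsetSum _ fun k _ => hF j k]
  exact Finset.sum_congr rfl fun j _ => integral_finsetSum _ fun k _ => hF j k

theorem dotProduct_mulVec_eq_sum_sum (A : Matrix ι ι ℝ) (v w : ι → ℝ) :
    v ⬝ᵥ A *ᵥ w = ∑ j, ∑ k, v j * A j k * w k := by
  simp only [dotProduct, mulVec, Finset.mul_sum, mul_assoc]

theorem integral_sub_dotProduct_sq {f : Ω → ℝ} {Z : Ω → ι → ℝ} (hf : MemLp f 2 μ)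
    (hZ : ∀ j, MemLp (fun ω => Z ω j) 2 μ) (w : ι → ℝ) :
    ∫ ω, (f ω - w ⬝ᵥ Z ω) ^ 2 ∂μ = ∫ ω, f ω ^ 2 ∂μ
      - 2 * (w ⬝ᵥ fun j => ∫ ω, f ω * Z ω j ∂μ) + w ⬝ᵥ secondMoment μ Z *ᵥ w := by
  have hfZ : ∀ j, Integrable (fun ω => w j * (f ω * Z ω j)) μ := fun j =>
    (hf.integrable_mul (hZ j)).const_mul (w j)
  have hlin : Integrable (fun ω => 2 * ∑ j, w j * (f ω * Z ω j)) μ :=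
    (integrable_finsetSum _ fun j _ => hfZ j).const_mul 2
  have hquad : ∀ j k, Integrable (fun ω => w j * (Z ω j * Z ω k) * w k) μ := fun j k =>
    (((hZ j).integrable_mul (hZ k)).const_mul (w j)).mul_const (w k)
  calc ∫ ω, (f ω - w ⬝ᵥ Z ω) ^ 2 ∂μ
      = ∫ ω, f ω ^ 2 - 2 * ∑ j, w j * (f ω * Z ω j)
          + ∑ j, ∑ k, w j * (Z ω j * Z ω k) * w k ∂μ := by
        congr 1; ext ω
        rw [sub_sq, sq (w ⬝ᵥ Z ω), dotProduct, Finset.sum_mul_sum, mul_assoc, Finset.mul_sum]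
        simp only [mul_comm, mul_left_comm]
    _ = _ := by
        have hsub : Integrable (fun ω => f ω ^ 2 - 2 * ∑ j, w j * (f ω * Z ω j)) μ :=
          hf.integrable_sq.sub hlin
        rw [integral_add hsub (integrable_finsetSum _ fun j _ =>
          integrable_finsetSum _ fun k _ => hquad j k), integral_sub hf.integrable_sq hlin,
          integral_const_mul, integral_finsetSum _ fun j _ => hfZ j, integral_sum_sum hquad,
          dotProduct_mulVec_eq_sum_sum]
        simp only [integral_mul_const, integral_const_mul, dotProduct, secondMoment, of_apply]

theorem Matrix.PosDef.exists_forall_quadratic_le {M : Matrix ι ι ℝ} (hM : M.PosDef) (v : ι → ℝ) :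
    ∃ w₀, ∀ w, w₀ ⬝ᵥ M *ᵥ w₀ - 2 * (w₀ ⬝ᵥ v) ≤ w ⬝ᵥ M *ᵥ w - 2 * (w ⬝ᵥ v) := by
  classical
  refine ⟨M⁻¹ *ᵥ v, fun w => ?_⟩
  set w₀ := M⁻¹ *ᵥ v
  have hMw₀ : M *ᵥ w₀ = v := by
    rw [mulVec_mulVec, mul_nonsing_inv _ hM.det_pos.ne'.isUnit, one_mulVec]
  have hsymm : ∀ x, x ⬝ᵥ M *ᵥ w₀ = w₀ ⬝ᵥ M *ᵥ x := fun x => by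
    rw [dotProduct_mulVec, ← mulVec_transpose, dotProduct_comm,
      ← conjTranspose_eq_transpose_of_trivial, hM.isHermitian.eq]
  -- the excess over the claimed minimum is the nonnegative form at `w - w₀`
  have hexcess := hM.posSemidef.dotProduct_mulVec_nonneg (w - w₀)
  simp only [star_trivial, mulVec_sub, dotProduct_sub, sub_dotProduct, ← hsymm w, hMw₀]
    at hexcess
  rw [hMw₀]
  linarith

theorem exists_forall_integral_sub_dotProduct_sq_le {f : Ω → ℝ} {Z : Ω → ι → ℝ}
    (hf : MemLp f 2 μ) (hZ : ∀ j, MemLp (fun ω => Z ω j) 2 μ) (hG : (secondMoment μ Z).PosDef) :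
    ∃ w₀, ∀ w, ∫ ω, (f ω - w₀ ⬝ᵥ Z ω) ^ 2 ∂μ ≤ ∫ ω, (f ω - w ⬝ᵥ Z ω) ^ 2 ∂μ := by
  obtain ⟨w₀, hw₀⟩ := hG.exists_forall_quadratic_le fun j => ∫ ω, f ω * Z ω j ∂μ
  refine ⟨w₀, fun w => ?_⟩
  rw [integral_sub_dotProduct_sq hf hZ, integral_sub_dotProduct_sq hf hZ]
  linarith [hw₀ w]

theorem ProbabilityTheory.IndepFun.integral_dotProduct_sq {U X : Ω → ι → ℝ} (hUX : IndepFun U X μ)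
    (hU : ∀ j, MemLp (fun ω => U ω j) 2 μ) (hX : ∀ j, MemLp (fun ω => X ω j) 2 μ) :
    ∫ ω, (U ω ⬝ᵥ X ω) ^ 2 ∂μ = ∫ ω, U ω ⬝ᵥ secondMoment μ X *ᵥ U ω ∂μ := by
  have hUU : ∀ j k, Integrable (fun ω => U ω j * U ω k) μ := fun j k =>
    (hU j).integrable_mul (hU k)
  have hind : ∀ j k, IndepFun (fun ω => U ω j * U ω k) (fun ω => X ω j * X ω k) μ := fun j k =>
    hUX.comp (φ := fun x : ι → ℝ => x j * x k) (ψ := fun x : ι → ℝ => x j * x k)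
      (by fun_prop) (by fun_prop)
  have hUXint : ∀ j k, Integrable (fun ω => U ω j * U ω k * (X ω j * X ω k)) μ := fun j k =>
    (hind j k).integrable_mul (hUU j k) ((hX j).integrable_mul (hX k))
  calc ∫ ω, (U ω ⬝ᵥ X ω) ^ 2 ∂μ
      = ∫ ω, ∑ j, ∑ k, U ω j * U ω k * (X ω j * X ω k) ∂μ := by
        congr 1; ext ω
        rw [sq, dotProduct, Finset.sum_mul_sum]
        simp only [mul_comm, mul_left_comm]
    _ = ∑ j, ∑ k, ∫ ω, U ω j * U ω k * (X ω j * X ω k) ∂μ := integral_sum_sum hUXint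
    _ = ∑ j, ∑ k, ∫ ω, U ω j * secondMoment μ X j k * U ω k ∂μ := by
        refine Finset.sum_congr rfl fun j _ => Finset.sum_congr rfl fun k _ => ?_
        refine ((hind j k).integral_mul_eq_mul_integral (hUU j k).1
          ((hX j).integrable_mul (hX k)).1).trans ?_
        rw [← integral_mul_const]
        congr 1; ext ω
        simp only [secondMoment, of_apply]
        ring
    _ = ∫ ω, ∑ j, ∑ k, U ω j * secondMoment μ X j k * U ω k ∂μ :=
        (integral_sum_sum fun j k => ((hU j).mul_const _).integrable_mul (hU k)).symm
    _ = _ := by simp_rw [dotProduct_mulVec_eq_sum_sum]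

theorem integral_dotProduct_mulVec_pos {S : Matrix ι ι ℝ} (hS : S.PosDef) {U : Ω → ι → ℝ}
    (hU : ∀ j, MemLp (fun ω => U ω j) 2 μ) (hU0 : ¬ U =ᵐ[μ] 0) :
    0 < ∫ ω, U ω ⬝ᵥ S *ᵥ U ω ∂μ := by
  have hint : Integrable (fun ω => U ω ⬝ᵥ S *ᵥ U ω) μ :=
    integrable_finsetSum _ fun j _ =>
      (hU j).integrable_mul (memLp_finsetSum _ fun k _ => (hU k).const_mul (S j k))
  rw [integral_pos_iff_support_of_nonneg
    (fun ω => by simpa using hS.posSemidef.dotProduct_mulVec_nonneg (U ω)) hint]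
  convert pos_iff_ne_zero.2 (ae_iff.not.1 hU0)
  ext ω
  simp only [Function.mem_support, Set.mem_ofPred_eq, Pi.zero_apply]
  refine ⟨fun h hU => h (by simp [hU]), fun h => ?_⟩
  simpa using (hS.dotProduct_mulVec_pos h).ne'

end SecondMoment

theorem memLp_comp_of_ae_mem_isCompact {E : Type*} [TopologicalSpace E] [MeasurableSpace E]
    [OpensMeasurableSpace E] [IsFiniteMeasure μ] {V : Ω → E} (hV : AEMeasurable V μ) {K : Set E}
    (hK : IsCompact K) (hVK : ∀ᵐ ω ∂μ, V ω ∈ K) {φ : E → ℝ} (hφ : Continuous φ) (p : ENNReal) :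
    MemLp (fun ω => φ (V ω)) p μ := by
  obtain ⟨C, hC⟩ := hK.exists_bound_of_continuousOn hφ.continuousOn
  exact MemLp.of_bound (hφ.measurable.comp_aemeasurable hV).aestronglyMeasurable C
    (hVK.mono fun ω hω => hC _ hω)

section AffineApprox

variable {ι : Type*} [Fintype ι]

theorem memLp_comp_of_abs_le [IsFiniteMeasure μ] {X : Ω → ι → ℝ} {u : Ω → ℝ}
    (hX : Measurable X) (hu : Measurable u) {C : ℝ} (hbdd : ∀ ω, |u ω| ≤ C ∧ ∀ j, |X ω j| ≤ C)
    {φ : (ι → ℝ) × ℝ → ℝ} (hφ : Continuous φ) (p : ENNReal) :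
    MemLp (fun ω => φ (X ω, u ω)) p μ :=
  memLp_comp_of_ae_mem_isCompact (hX.prodMk hu).aemeasurable
    ((isCompact_univ_pi fun _ => isCompact_Icc).prod (isCompact_Icc (a := -C) (b := C)))
    (ae_of_all _ fun ω => ⟨fun j _ => abs_le.1 ((hbdd ω).2 j), abs_le.1 (hbdd ω).1⟩) hφ p

noncomputable def affineApproxError (μ : Measure Ω) (β : ℝ → ι → ℝ) (X : Ω → ι → ℝ)
    (u : Ω → ℝ) (a b : ι → ℝ) : ℝ :=
  ∫ ω, (β (u ω) ⬝ᵥ X ω - a ⬝ᵥ X ω - (b ⬝ᵥ X ω) * u ω) ^ 2 ∂μ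

theorem affineApproxError_eq_integral_sq (μ : Measure Ω) (β : ℝ → ι → ℝ) (X : Ω → ι → ℝ)
    (u : Ω → ℝ) (a b : ι → ℝ) :
    affineApproxError μ β X u a b
      = ∫ ω, ((fun j => β (u ω) j - a j - b j * u ω) ⬝ᵥ X ω) ^ 2 ∂μ := by
  unfold affineApproxError
  congr 1; ext ω; congr 1
  simp only [dotProduct, Finset.sum_mul, ← Finset.sum_sub_distrib]
  exact Finset.sum_congr rfl fun j _ => by ring

theorem exists_minimizer_affineApproxError_pos [IsFiniteMeasure μ] {X : Ω → ι → ℝ}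
    {u : Ω → ℝ} (hX : Measurable X) (hu : Measurable u) (hXu : IndepFun X u μ) {C : ℝ}
    (hbdd : ∀ ω, |u ω| ≤ C ∧ ∀ j, |X ω j| ≤ C) {β : ℝ → ι → ℝ} (hβ : Continuous β)
    (hM : (secondMoment μ fun ω => Sum.elim (X ω) fun j => u ω * X ω j).PosDef)
    (hnotaff : ∀ a b : ι → ℝ, ¬ ∀ᵐ ω ∂μ, ∀ j, β (u ω) j = a j + b j * u ω) :
    ∃ a₀ b₀, 0 < affineApproxError μ β X u a₀ b₀ ∧
      ∀ a b, affineApproxError μ β X u a₀ b₀ ≤ affineApproxError μ β X u a b := by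
  have hL2 : ∀ φ : (ι → ℝ) × ℝ → ℝ, Continuous φ → MemLp (fun ω => φ (X ω, u ω)) 2 μ :=
    fun φ hφ => memLp_comp_of_abs_le hX hu hbdd hφ 2
  set Z : Ω → ι ⊕ ι → ℝ := fun ω => Sum.elim (X ω) fun j => u ω * X ω j
  have hZ : ∀ j, MemLp (fun ω => Z ω j) 2 μ := by
    rintro (j | j)
    · exact hL2 (fun q => q.1 j) (by fun_prop)
    · exact hL2 (fun q => q.2 * q.1 j) (by fun_prop)
  have herr : ∀ a b, affineApproxError μ β X u a b
      = ∫ ω, (β (u ω) ⬝ᵥ X ω - Sum.elim a b ⬝ᵥ Z ω) ^ 2 ∂μ := fun a b => by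
    unfold affineApproxError
    congr 1; ext ω
    simp only [Z, dotProduct, Fintype.sum_sum_type, Sum.elim_inl, Sum.elim_inr,
      mul_left_comm _ (u ω), ← Finset.mul_sum, mul_comm _ (u ω)]
    ring
  obtain ⟨w₀, hw₀⟩ := exists_forall_integral_sub_dotProduct_sq_le
    (hL2 (fun q => β q.2 ⬝ᵥ q.1) (by fun_prop)) hZ hM
  obtain ⟨a₀, b₀, rfl⟩ : ∃ a₀ b₀, w₀ = Sum.elim a₀ b₀ :=
    ⟨w₀ ∘ Sum.inl, w₀ ∘ Sum.inr, (Sum.elim_comp_inl_inr w₀).symm⟩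
  refine ⟨a₀, b₀, ?_, fun a b => by rw [herr, herr]; exact hw₀ _⟩
  have hind : IndepFun (fun ω j => β (u ω) j - a₀ j - b₀ j * u ω) X μ :=
    hXu.symm.comp (φ := fun t j => β t j - a₀ j - b₀ j * t) (by fun_prop) measurable_id
  have hδL2 : ∀ j, MemLp (fun ω => β (u ω) j - a₀ j - b₀ j * u ω) 2 μ := fun j =>
    hL2 (fun q => β q.2 j - a₀ j - b₀ j * q.2) (by fun_prop)
  rw [affineApproxError_eq_integral_sq, hind.integral_dotProduct_sq hδL2 fun j => hZ (Sum.inl j)]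
  refine integral_dotProduct_mulVec_pos (hM.submatrix Sum.inl_injective) hδL2 fun h =>
    hnotaff a₀ b₀ ?_
  filter_upwards [h] with ω hω j
  have hj := congrFun hω j
  simp only [Pi.zero_apply] at hj
  linarith

end AffineApprox

end

theorem population_mse_exceeds_noise_general {Ω : Type*} [MeasurableSpace Ω]
    (μ : Measure Ω) [IsProbabilityMeasure μ] (p : ℕ)
    (X : Ω → Fin p → ℝ) (u : Ω → ℝ) (ε : Ω → ℝ)
    (hX : Measurable X) (hu : Measurable u)
    (C : ℝ) (hbdd : ∀ ω, |u ω| ≤ C ∧ ∀ j, |X ω j| ≤ C)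
    (hεL2 : MemLp ε 2 μ)
    (hindep : IndepFun ε (fun ω => (X ω, u ω)) μ)
    (hXu : IndepFun X u μ)
    (hmean : ∫ ω, ε ω ∂μ = 0) (σ2 : ℝ) (hvar : ∫ ω, (ε ω) ^ 2 ∂μ = σ2)
    (β : ℝ → Fin p → ℝ) (hβ : Continuous β)
    (y : Ω → ℝ) (hy : ∀ ω, y ω = ∑ j, β (u ω) j * X ω j + ε ω)
    (I : Set ℝ) (hI : ∃ c d : ℝ, c < d ∧ I = Set.Icc c d ∧ 0 ≤ c ∧ d ≤ 1)
    (hpos : 0 < μ (u ⁻¹' I))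
    (hnotaff : ∀ a b : Fin p → ℝ,
      ¬ (∀ᵐ ω ∂(ProbabilityTheory.cond μ (u ⁻¹' I)),
        ∀ j, β (u ω) j = a j + b j * u ω))
    (M : Matrix (Fin p ⊕ Fin p) (Fin p ⊕ Fin p) ℝ)
    (hM : ∀ j k, M j k = ∫ ω,
      (Sum.elim (fun j' => X ω j') (fun j' => u ω * X ω j') j) *
      (Sum.elim (fun k' => X ω k') (fun k' => u ω * X ω k') k)
        ∂(ProbabilityTheory.cond μ (u ⁻¹' I)))
    (hMpd : M.PosDef) :
    σ2 < ⨅ ab : (Fin p → ℝ) × (Fin p → ℝ),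
      ∫ ω, (y ω - ∑ j, ab.1 j * X ω j - (∑ j, ab.2 j * X ω j) * u ω) ^ 2
        ∂(ProbabilityTheory.cond μ (u ⁻¹' I)) := by
  obtain ⟨c, d, -, rfl, -, -⟩ := hI
  have hs : u ⁻¹' Set.Icc c d = (fun ω => (X ω, u ω)) ⁻¹' (Set.univ ×ˢ Set.Icc c d) := by
    ext; simp
  obtain ⟨a₀, b₀, hgap, hmin⟩ := exists_minimizer_affineApproxError_pos hX hu
    (hXu.cond_preimage hu measurableSet_Icc) hbdd hβ
    (by convert hMpd; ext j k; exact (hM j k).symm) hnotaff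
  have hmse : ∀ ab : (Fin p → ℝ) × (Fin p → ℝ),
      ∫ ω, (y ω - ∑ j, ab.1 j * X ω j - (∑ j, ab.2 j * X ω j) * u ω) ^ 2 ∂μ[|u ⁻¹' Set.Icc c d]
        = affineApproxError μ[|u ⁻¹' Set.Icc c d] β X u ab.1 ab.2 + σ2 := by
    intro ab
    have hφ : Continuous fun q : (Fin p → ℝ) × ℝ =>
        β q.2 ⬝ᵥ q.1 - ab.1 ⬝ᵥ q.1 - (ab.2 ⬝ᵥ q.1) * q.2 := by fun_prop
    have h := hindep.integral_add_sq_cond_preimage (hX.prodMk hu)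
      (MeasurableSet.univ.prod measurableSet_Icc) (hs ▸ hpos.ne') hεL2 hmean hφ.measurable
      (memLp_comp_of_abs_le hX hu hbdd hφ 2)
    rw [← hs, hvar] at h
    rw [affineApproxError, ← h]
    congr 1; ext ω; rw [hy]; simp only [dotProduct]; ring
  calc σ2 < affineApproxError μ[|u ⁻¹' Set.Icc c d] β X u a₀ b₀ + σ2 := by linarith
    _ ≤ _ := le_ciInf fun ab => by rw [hmse]; linarith [hmin ab.1 ab.2]

/-- If the true varying coefficient `β` is not (conditionally a.e.) affine on an interval
`I` with `P(u ∈ I) > 0`, and the conditional second-moment matrix of `(X, uX)` given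
`u ∈ I` is positive definite, then the minimal population mean squared error of any
affine-in-`u` linear fit, conditionally on `u ∈ I`, strictly exceeds `σ²`. -/
theorem population_mse_exceeds_noise {Ω : Type*} [MeasurableSpace Ω]
    (μ : Measure Ω) [IsProbabilityMeasure μ] (p : ℕ)
    (X : Ω → Fin p → ℝ) (u : Ω → ℝ) (ε : Ω → ℝ)
    (hX : Measurable X) (hu : Measurable u) (hε : Measurable ε)
    (C : ℝ) (hbdd : ∀ ω, |u ω| ≤ C ∧ ∀ j, |X ω j| ≤ C)
    (hεL2 : MemLp ε 2 μ)
    (hindep : IndepFun ε (fun ω => (X ω, u ω)) μ)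
    (hXu : IndepFun X u μ)
    (hmean : ∫ ω, ε ω ∂μ = 0) (σ2 : ℝ) (hvar : ∫ ω, (ε ω) ^ 2 ∂μ = σ2)
    (β : ℝ → Fin p → ℝ) (hβ : Continuous β)
    (y : Ω → ℝ) (hy : ∀ ω, y ω = ∑ j, β (u ω) j * X ω j + ε ω)
    (I : Set ℝ) (hI : ∃ c d : ℝ, c < d ∧ I = Set.Icc c d ∧ 0 ≤ c ∧ d ≤ 1)
    (hpos : 0 < μ (u ⁻¹' I))
    (hnotaff : ∀ a b : Fin p → ℝ,
      ¬ (∀ᵐ ω ∂(ProbabilityTheory.cond μ (u ⁻¹' I)),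
        ∀ j, β (u ω) j = a j + b j * u ω))
    (M : Matrix (Fin p ⊕ Fin p) (Fin p ⊕ Fin p) ℝ)
    (hM : ∀ j k, M j k = ∫ ω,
      (Sum.elim (fun j' => X ω j') (fun j' => u ω * X ω j') j) *
      (Sum.elim (fun k' => X ω k') (fun k' => u ω * X ω k') k)
        ∂(ProbabilityTheory.cond μ (u ⁻¹' I)))
    (hMpd : M.PosDef) :
    σ2 < ⨅ ab : (Fin p → ℝ) × (Fin p → ℝ),
      ∫ ω, (y ω - ∑ j, ab.1 j * X ω j - (∑ j, ab.2 j * X ω j) * u ω) ^ 2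
        ∂(ProbabilityTheory.cond μ (u ⁻¹' I)) :=
  population_mse_exceeds_noise_general μ p X u ε hX hu C hbdd hεL2 hindep hXu hmean σ2 hvar β hβ y
    hy I hI hpos hnotaff M hM hMpd
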